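/- Let Θ ∈ ℝ, let y, z ∈ E with y ∈ C, and set w̄ = P_C(y + Θ·(y − z)). Suppose x⁺ ∈ E is an ε-inexact proximal-gradient step from w̄ with step size β > 0 satisfying the majorization condition at (x⁺, w̄). Then 2β·(f(y) − f(x⁺)) ≥ ‖x⁺ − y‖² − Θ²·‖y − z‖² − ε². -/

import Mathlib

/-!
Summing the ε-subgradient inequality for `R`, the majorization of `L` at `x⁺` and the gradient
inequality of `L` at `w̄` gives, for every `y`, the three-point estimate
`2β (f y − f x⁺) ≥ ‖x⁺ − y‖² − ‖y − w̄‖² − ε²`. Since `w̄` is the projection of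
`y + Θ (y − z)` onto `C` and `y ∈ C`, the obtuse-angle criterion gives
`‖y − w̄‖ ≤ ‖y − (y + Θ (y − z))‖ = |Θ| ‖y − z‖`.
-/

open RealInnerProductSpace

theorem ConvexOn.add_fderiv_sub_le {F : Type*} [NormedAddCommGroup F] [NormedSpace ℝ F]
    {s : Set F} {f : F → ℝ} {f' : F →L[ℝ] ℝ} {x y : F} (hf : ConvexOn ℝ s f)
    (hx : x ∈ s) (hy : y ∈ s) (hdf : HasFDerivAt f f' x) :
    f x + f' (y - x) ≤ f y := by
  let ℓ : ℝ →ᵃ[ℝ] F := AffineMap.lineMap x y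
  have hline : ConvexOn ℝ (ℓ ⁻¹' s) (f ∘ ℓ) := hf.comp_affineMap ℓ
  have hderiv : HasDerivAt (f ∘ ℓ) (f' (y - x)) 0 := by
    rw [← AffineMap.lineMap_apply_zero x y (k := ℝ)] at hdf
    exact hdf.comp_hasDerivAt 0 AffineMap.hasDerivAt_lineMap
  have hℓ0 : ℓ 0 = x := AffineMap.lineMap_apply_zero x y
  have hℓ1 : ℓ 1 = y := AffineMap.lineMap_apply_one x y
  have hslope := hline.le_slope_of_hasDerivAt (x := 0) (y := 1) (by simpa [hℓ0])
    (by simpa [hℓ1]) one_pos hderiv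
  simp only [slope_def_field, Function.comp_apply, hℓ0, hℓ1, sub_zero, div_one] at hslope
  linarith

theorem ConvexOn.add_inner_gradient_le {F : Type*} [NormedAddCommGroup F] [InnerProductSpace ℝ F]
    [CompleteSpace F] {s : Set F} {f : F → ℝ} {g x y : F} (hf : ConvexOn ℝ s f)
    (hx : x ∈ s) (hy : y ∈ s) (hg : HasGradientAt f g x) :
    f x + ⟪y - x, g⟫ ≤ f y := by
  simpa [real_inner_comm] using hf.add_fderiv_sub_le hx hy hg.hasFDerivAt

theorem norm_sub_le_of_forall_norm_sub_le {F : Type*} [NormedAddCommGroup F]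
    [InnerProductSpace ℝ F] {K : Set F} (hK : Convex ℝ K) {u v c : F} (hv : v ∈ K)
    (hmin : ∀ w ∈ K, ‖u - v‖ ≤ ‖u - w‖) (hc : c ∈ K) : ‖c - v‖ ≤ ‖c - u‖ := by
  have : Nonempty K := ⟨⟨v, hv⟩⟩
  have hinf : ‖u - v‖ = ⨅ w : K, ‖u - w‖ :=
    le_antisymm (le_ciInf fun w => hmin w w.2)
      (ciInf_le ⟨0, Set.forall_mem_range.2 fun _ => norm_nonneg _⟩ (⟨v, hv⟩ : K))
  have hobtuse : ⟪u - v, c - v⟫ ≤ 0 := (norm_eq_iInf_iff_real_inner_le_zero hK hv).1 hinf c hc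
  have hsq : ‖c - u‖ ^ 2 = ‖c - v‖ ^ 2 - 2 * ⟪c - v, u - v⟫ + ‖u - v‖ ^ 2 := by
    rw [← norm_sub_sq_real, sub_sub_sub_cancel_right]
  refine le_of_sq_le_sq ?_ (norm_nonneg _)
  nlinarith [real_inner_comm (u - v) (c - v), sq_nonneg ‖u - v‖]

theorem inexact_proxGrad_step_descent {F : Type*} [NormedAddCommGroup F]
    [InnerProductSpace ℝ F] [CompleteSpace F] {L R : F → ℝ} {g w x : F} {β ε : ℝ}
    (hL : ConvexOn ℝ Set.univ L) (hg : HasGradientAt L g w) (hβ : 0 < β)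
    (hprox : ∀ v, R v ≥ R x + ⟪v - x, β⁻¹ • (w - β • g - x)⟫ - ε ^ 2 / (2 * β))
    (hmaj : L x ≤ L w + ⟪x - w, g⟫ + ‖x - w‖ ^ 2 / (2 * β)) (y : F) :
    2 * β * (L y + R y - (L x + R x)) ≥ ‖x - y‖ ^ 2 - ‖y - w‖ ^ 2 - ε ^ 2 := by
  have hgrad : L w + ⟪y - w, g⟫ ≤ L y := hL.add_inner_gradient_le trivial trivial hg
  have hproxy : ⟪y - x, β⁻¹ • (w - β • g - x)⟫ = β⁻¹ * ⟪y - x, w - x⟫ - ⟪y - x, g⟫ := by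
    rw [sub_right_comm, real_inner_smul_right, inner_sub_right, real_inner_smul_right]
    field_simp
  have hlin : ⟪y - w, g⟫ - ⟪x - w, g⟫ = ⟪y - x, g⟫ := by
    rw [← inner_sub_left, sub_sub_sub_cancel_right]
  have hpolar : ‖y - w‖ ^ 2 = ‖x - y‖ ^ 2 - 2 * ⟪y - x, w - x⟫ + ‖x - w‖ ^ 2 := by
    rw [norm_sub_rev x y, norm_sub_rev x w, ← norm_sub_sq_real, sub_sub_sub_cancel_right]
  have hf : L y + R y - (L x + R x) ≥
      β⁻¹ * ⟪y - x, w - x⟫ - (‖x - w‖ ^ 2 + ε ^ 2) / (2 * β) := by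
    rw [add_div]; linarith [hprox y]
  calc 2 * β * (L y + R y - (L x + R x))
      ≥ 2 * β * (β⁻¹ * ⟪y - x, w - x⟫ - (‖x - w‖ ^ 2 + ε ^ 2) / (2 * β)) := by gcongr
    _ = ‖x - y‖ ^ 2 - ‖y - w‖ ^ 2 - ε ^ 2 := by rw [hpolar]; field_simp; ring

theorem pnpg_descent_from_projection_general {E : Type*} [NormedAddCommGroup E]
    [InnerProductSpace ℝ E] [FiniteDimensional ℝ E]
    (L R f : E → ℝ) (gradL : E → E)
    (hLconv : ConvexOn ℝ Set.univ L)
    (hLgrad : ∀ x, HasGradientAt L (gradL x) x)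
    (hf : ∀ x, f x = L x + R x)
    (C : Set E) (hCconv : Convex ℝ C)
    (P : E → E) (hPmem : ∀ v, P v ∈ C)
    (hPproj : ∀ v, ∀ c ∈ C, ‖v - P v‖ ≤ ‖v - c‖)
    (Θ : ℝ) (y z : E) (hy : y ∈ C)
    (wbar : E) (hwbar : wbar = P (y + Θ • (y - z)))
    (xplus : E) (β ε : ℝ) (hβ : 0 < β)
    (hprox : ∀ v, R v ≥ R xplus +
      ⟪v - xplus, β⁻¹ • (wbar - β • gradL wbar - xplus)⟫ - ε ^ 2 / (2 * β))
    (hmaj : L xplus ≤ L wbar + ⟪xplus - wbar, gradL wbar⟫ + ‖xplus - wbar‖ ^ 2 / (2 * β)) :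
    2 * β * (f y - f xplus) ≥ ‖xplus - y‖ ^ 2 - Θ ^ 2 * ‖y - z‖ ^ 2 - ε ^ 2 := by
  have hproj : ‖y - wbar‖ ≤ |Θ| * ‖y - z‖ := by
    have hnonexp :=
      norm_sub_le_of_forall_norm_sub_le hCconv (hPmem _) (hPproj (y + Θ • (y - z))) hy
    rwa [← hwbar, sub_add_cancel_left, norm_neg, norm_smul, Real.norm_eq_abs] at hnonexp
  have hproj_sq : ‖y - wbar‖ ^ 2 ≤ Θ ^ 2 * ‖y - z‖ ^ 2 := by
    simpa only [mul_pow, sq_abs] using pow_le_pow_left₀ (norm_nonneg _) hproj 2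
  rw [hf, hf]
  linarith [inexact_proxGrad_step_descent hLconv (hLgrad wbar) hβ hprox hmaj y]

/-- If `w̄ = P_C(y + Θ(y − z))` with `y ∈ C` and `x⁺` is an `ε`-inexact
proximal-gradient step from `w̄` with step size `β > 0` satisfying the majorization
condition at `(x⁺, w̄)`, then `2β (f(y) − f(x⁺)) ≥ ‖x⁺ − y‖² − Θ²‖y − z‖² − ε²`. -/
theorem pnpg_descent_from_projection {E : Type*} [NormedAddCommGroup E]
    [InnerProductSpace ℝ E] [FiniteDimensional ℝ E]
    (L R f : E → ℝ) (gradL : E → E)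
    (hLconv : ConvexOn ℝ Set.univ L)
    (hLgrad : ∀ x, HasGradientAt L (gradL x) x)
    (hRconv : ConvexOn ℝ Set.univ R)
    (hf : ∀ x, f x = L x + R x)
    (C : Set E) (hCne : C.Nonempty) (hCcl : IsClosed C) (hCconv : Convex ℝ C)
    (P : E → E) (hPmem : ∀ v, P v ∈ C)
    (hPproj : ∀ v, ∀ c ∈ C, ‖v - P v‖ ≤ ‖v - c‖)
    (Θ : ℝ) (y z : E) (hy : y ∈ C)
    (wbar : E) (hwbar : wbar = P (y + Θ • (y - z)))
    (xplus : E) (β ε : ℝ) (hβ : 0 < β) (hε : 0 ≤ ε)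
    (hprox : ∀ v, R v ≥ R xplus +
      ⟪v - xplus, β⁻¹ • (wbar - β • gradL wbar - xplus)⟫ - ε ^ 2 / (2 * β))
    (hmaj : L xplus ≤ L wbar + ⟪xplus - wbar, gradL wbar⟫ + ‖xplus - wbar‖ ^ 2 / (2 * β)) :
    2 * β * (f y - f xplus) ≥ ‖xplus - y‖ ^ 2 - Θ ^ 2 * ‖y - z‖ ^ 2 - ε ^ 2 :=
  pnpg_descent_from_projection_general L R f gradL hLconv hLgrad hf C hCconv P hPmem hPproj Θ y z hy
    wbar hwbar xplus β ε hβ hprox hmaj
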